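/- Fix β > 0 and an integer N_s ≥ 1, and define the SUMF mutual information of TH-CDMA with Gaussian inputs as I(γ) = β · Σ_{k ≥ 0} ((N_s²β)^k e^{−N_s²β}/k!) · log₂( 1 + γ/(1 + (k/N_s²)γ) ) for γ > 0. Then I(γ) is unbounded as γ → ∞, and its high-SNR slope is lim_{γ→∞} I(γ)/log₂ γ = β e^{−N_s²β}. In particular, for fixed N_s the slope is maximized over β at β = 1/N_s², where it equals 1/(e N_s²). -/

import Mathlib

/-!
Only the `k = 0` term of the Poisson mixture (no colliding pulse, weight `e^{-N_s²β}`) has an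
SINR that grows with `γ`. For `k ≥ 1` the SINR `γ / (1 + kγ/N_s²)` stays below `N_s²`, and the
Poisson weights sum to one, so all these terms together contribute at most
`β log₂ (1 + N_s²)`. Hence `I(γ) = β e^{-N_s²β} log₂ (1 + γ) + O(1)`, which gives both the
divergence and the slope. The optimisation over `β` is `x e^{-x} ≤ e⁻¹`.
-/
/-- The large-system SUMF mutual information of TH-CDMA with load `β`, `N_s` pulses per
symbol and Gaussian inputs:
`I(γ) = β·Σ_{k≥0} ((N_s²β)^k e^{−N_s²β}/k!)·log₂(1 + γ/(1 + (k/N_s²)γ))`. -/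
noncomputable def sumfMutualInfo (β : ℝ) (Ns : ℕ) (γ : ℝ) : ℝ :=
  β * ∑' k : ℕ, ((Ns : ℝ) ^ 2 * β) ^ k * Real.exp (-(Ns : ℝ) ^ 2 * β) /
      (Nat.factorial k : ℝ) *
    Real.logb 2 (1 + γ / (1 + ((k : ℝ) / (Ns : ℝ) ^ 2) * γ))

open Real Filter Topology Set

theorem tsum_mul_mem_Icc_of_tail_mem_Icc {p f : ℕ → ℝ} {s B : ℝ} (hp : HasSum p s)
    (hp_nonneg : ∀ k, 0 ≤ p k) (hf : ∀ k, f (k + 1) ∈ Icc 0 B) :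
    ∑' k, p k * f k ∈ Icc (p 0 * f 0) (p 0 * f 0 + B * s) := by
  have hp_tail : Summable fun k => p (k + 1) := (summable_nat_add_iff 1).mpr hp.summable
  have htail : Summable fun k => p (k + 1) * f (k + 1) :=
    .of_nonneg_of_le (fun k => mul_nonneg (hp_nonneg _) (hf k).1)
      (fun k => mul_le_mul_of_nonneg_left (hf k).2 (hp_nonneg _)) (hp_tail.mul_right B)
  have hs : s = p 0 + ∑' k, p (k + 1) := hp.tsum_eq ▸ hp.summable.tsum_eq_zero_add
  have htail_le : ∑' k, p (k + 1) * f (k + 1) ≤ B * s :=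
    calc ∑' k, p (k + 1) * f (k + 1) ≤ ∑' k, p (k + 1) * B :=
          htail.tsum_le_tsum (fun k => mul_le_mul_of_nonneg_left (hf k).2 (hp_nonneg _))
            (hp_tail.mul_right B)
      _ ≤ B * s := by
          rw [tsum_mul_right, mul_comm, hs]
          exact mul_le_mul_of_nonneg_left (le_add_of_nonneg_left (hp_nonneg 0))
            ((hf 0).1.trans (hf 0).2)
  rw [((summable_nat_add_iff 1).mp htail).tsum_eq_zero_add]
  exact ⟨le_add_of_nonneg_right (tsum_nonneg fun k => mul_nonneg (hp_nonneg _) (hf k).1),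
    add_le_add_right htail_le _⟩

theorem logb_one_add_div_one_add_mul_mem_Icc {b c t γ : ℝ} (hb : 1 < b) (hc : 0 < c)
    (ht : 1 ≤ t) (hγ : 0 ≤ γ) :
    logb b (1 + γ / (1 + t / c * γ)) ∈ Icc 0 (logb b (1 + c)) := by
  have hden : 0 < 1 + t / c * γ := by positivity
  have hsinr_nonneg : 0 ≤ γ / (1 + t / c * γ) := by positivity
  have hsinr_le : γ / (1 + t / c * γ) ≤ c := by
    rw [div_le_iff₀ hden, mul_add, mul_one, ← mul_assoc, mul_div_cancel₀ t hc.ne']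
    nlinarith
  exact ⟨logb_nonneg hb (by linarith), logb_le_logb_of_le hb (by linarith) (by linarith)⟩

theorem tendsto_logb_one_add_div_logb {b : ℝ} (hb : 1 < b) :
    Tendsto (fun x => logb b (1 + x) / logb b x) atTop (𝓝 1) := by
  have h := ((tendsto_log_comp_add_sub_log 1).div_atTop tendsto_log_atTop).const_add 1
  rw [add_zero] at h
  refine h.congr' ?_
  filter_upwards [eventually_gt_atTop 1] with x hx
  have hlog : log x ≠ 0 := (log_pos hx).ne'
  rw [logb, logb, div_div_div_cancel_right₀ (log_pos hb).ne', add_comm 1 x]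
  field_simp
  ring

theorem tendsto_div_logb_of_le_of_le {u : ℝ → ℝ} {a b M : ℝ} (hb : 1 < b)
    (hlow : ∀ᶠ x in atTop, a * logb b (1 + x) ≤ u x)
    (hup : ∀ᶠ x in atTop, u x ≤ a * logb b (1 + x) + M) :
    Tendsto (fun x => u x / logb b x) atTop (𝓝 a) := by
  have hmain : Tendsto (fun x => a * (logb b (1 + x) / logb b x)) atTop (𝓝 a) := by
    simpa using (tendsto_logb_one_add_div_logb hb).const_mul a
  have hupper : Tendsto (fun x => a * (logb b (1 + x) / logb b x) + M / logb b x)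
      atTop (𝓝 a) := by
    simpa using hmain.add (tendsto_const_nhds.div_atTop (tendsto_logb_atTop hb))
  have hpos : ∀ᶠ x in atTop, 0 < logb b x := by
    filter_upwards [eventually_gt_atTop 1] with x hx using logb_pos hb hx
  refine tendsto_of_tendsto_of_tendsto_of_le_of_le' hmain hupper ?_ ?_
  · filter_upwards [hlow, hpos] with x hx hL
    rw [← mul_div_assoc]
    exact div_le_div_of_nonneg_right hx hL.le
  · filter_upwards [hup, hpos] with x hx hL
    rw [← mul_div_assoc, ← add_div]
    exact div_le_div_of_nonneg_right hx hL.le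

theorem hasSum_pow_mul_exp_neg_div_factorial {x : ℝ} (hx : 0 ≤ x) :
    HasSum (fun k : ℕ => x ^ k * exp (-x) / k.factorial) 1 := by
  refine (ProbabilityTheory.hasSum_one_poissonMeasure x.toNNReal).congr_fun fun k => ?_
  rw [coe_toNNReal x hx]
  ring

theorem sumfMutualInfo_mem_Icc {β : ℝ} (hβ : 0 ≤ β) {Ns : ℕ} (hNs : 1 ≤ Ns) {γ : ℝ}
    (hγ : 0 ≤ γ) :
    sumfMutualInfo β Ns γ ∈ Icc (β * exp (-(Ns : ℝ) ^ 2 * β) * logb 2 (1 + γ))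
      (β * exp (-(Ns : ℝ) ^ 2 * β) * logb 2 (1 + γ) + β * logb 2 (1 + (Ns : ℝ) ^ 2)) := by
  have hc : (0 : ℝ) < (Ns : ℝ) ^ 2 := by positivity
  have hweights := hasSum_pow_mul_exp_neg_div_factorial (mul_nonneg hc.le hβ)
  rw [neg_mul]
  obtain ⟨hlow, hup⟩ := tsum_mul_mem_Icc_of_tail_mem_Icc hweights (fun k => by positivity)
    (f := fun k : ℕ => logb 2 (1 + γ / (1 + (k : ℝ) / (Ns : ℝ) ^ 2 * γ)))
    (fun k => logb_one_add_div_one_add_mul_mem_Icc one_lt_two hc (by simp) hγ)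
  simp only [pow_zero, one_mul, Nat.factorial_zero, Nat.cast_one, div_one, Nat.cast_zero,
    zero_div, zero_mul, add_zero, mul_one] at hlow hup
  unfold sumfMutualInfo
  rw [neg_mul, mul_assoc]
  exact ⟨mul_le_mul_of_nonneg_left hlow hβ, by
    rw [← mul_add]; exact mul_le_mul_of_nonneg_left hup hβ⟩

theorem mul_exp_neg_mul_le {c : ℝ} (hc : 0 < c) (x : ℝ) :
    x * exp (-c * x) ≤ 1 / (exp 1 * c) := by
  have h := mul_exp_neg_le_exp_neg_one (c * x)
  rw [← neg_mul, exp_neg 1] at h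
  calc x * exp (-c * x) = c * x * exp (-c * x) / c := by field_simp
    _ ≤ (exp 1)⁻¹ / c := by gcongr
    _ = 1 / (exp 1 * c) := by field_simp

/-- Fix `β > 0` and `N_s ≥ 1`.  Then: (i) `I(γ) → ∞` as `γ → ∞`
(the SUMF mutual information of TH is unbounded); (ii) its high-SNR slope is
`lim_{γ→∞} I(γ)/log₂ γ = β·e^{−N_s²β}`; (iii) the slope `β ↦ β e^{−N_s²β}` is maximized
at `β = 1/N_s²`, where it equals `1/(e·N_s²)`. -/
theorem sumf_mutual_info_high_snr (β : ℝ) (hβ : 0 < β) (Ns : ℕ) (hNs : 1 ≤ Ns) :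
    Filter.Tendsto (fun γ : ℝ => sumfMutualInfo β Ns γ) Filter.atTop Filter.atTop ∧
    Filter.Tendsto (fun γ : ℝ => sumfMutualInfo β Ns γ / Real.logb 2 γ)
      Filter.atTop (nhds (β * Real.exp (-(Ns : ℝ) ^ 2 * β))) ∧
    (∀ β' : ℝ, 0 < β' →
      β' * Real.exp (-(Ns : ℝ) ^ 2 * β') ≤ 1 / (Real.exp 1 * (Ns : ℝ) ^ 2)) ∧
    (1 / (Ns : ℝ) ^ 2) * Real.exp (-(Ns : ℝ) ^ 2 * (1 / (Ns : ℝ) ^ 2)) =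
      1 / (Real.exp 1 * (Ns : ℝ) ^ 2) := by
  have hc : (0 : ℝ) < (Ns : ℝ) ^ 2 := by positivity
  have hbounds : ∀ᶠ γ in atTop, sumfMutualInfo β Ns γ ∈ _ :=
    (eventually_ge_atTop 0).mono fun γ hγ => sumfMutualInfo_mem_Icc hβ.le hNs hγ
  refine ⟨?_, tendsto_div_logb_of_le_of_le one_lt_two (hbounds.mono fun _ h => h.1)
    (hbounds.mono fun _ h => h.2), fun β' _ => mul_exp_neg_mul_le hc β', ?_⟩
  · refine tendsto_atTop_mono' _ (hbounds.mono fun _ h => h.1) ?_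
    exact ((tendsto_logb_atTop one_lt_two).comp
      (tendsto_atTop_add_const_left _ 1 tendsto_id)).const_mul_atTop (by positivity)
  · rw [neg_mul, mul_one_div_cancel hc.ne', exp_neg]
    field_simp
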